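/- arXiv:2012.14169 — 3 statements merged into one kernel-verified Lean document; each statement's English description precedes it below -/
import Mathlib

section
/- Let ε < 1/3 and Δ > 0, let G admit an (ε,η)-almost-clique decomposition V = V_sparse ∪ C_1 ∪ ... ∪ C_k, and let C be one of the almost-cliques. Then C has diameter at most 2 in G: for any two distinct vertices u, v ∈ C, either {u,v} ∈ E or there exists a vertex w ∈ C adjacent to both u and v. -/
open Finset

variable {V : Type*} [Fintype V] [DecidableEq V]

/-- Nodes `u, v` are `ε`-similar if `|N(u) ∩ N(v)| ≥ (1−ε)Δ`, where `Δ` is the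
maximum degree of `G`. -/
abbrev EpsSimilar (G : SimpleGraph V) [DecidableRel G.Adj] (ε : ℝ) (u v : V) : Prop :=
  (1 - ε) * (G.maxDegree : ℝ) ≤ ((G.neighborFinset u ∩ G.neighborFinset v).card : ℝ)

/-- Nodes `u, v` are `ε`-friends if they are `ε`-similar and adjacent. -/
abbrev Friends (G : SimpleGraph V) [DecidableRel G.Adj] (ε : ℝ) (u v : V) : Prop :=
  EpsSimilar G ε u v ∧ G.Adj u v

/-- A node is `ε`-dense if it has at least `(1−ε)Δ` `ε`-friends. -/
def IsDense (G : SimpleGraph V) [DecidableRel G.Adj] (ε : ℝ) (v : V) : Prop :=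
  (1 - ε) * (G.maxDegree : ℝ) ≤ ((univ.filter (fun w => Friends G ε v w)).card : ℝ)

/-- An `(ε,η)`-almost-clique decomposition of `G`: a partition
`V = V_sparse ∪ C 0 ∪ ... ∪ C (k-1)` such that `V_sparse` contains no `η`-dense node,
`(1−ε)Δ ≤ |C i| ≤ (1+ε)Δ`, and every `v ∈ C i` has at least `(1−ε)Δ` neighbors in `C i`. -/
structure IsACD (G : SimpleGraph V) [DecidableRel G.Adj] (ε η : ℝ) {k : ℕ}
    (Vsp : Finset V) (C : Fin k → Finset V) : Prop where
  cover : ∀ v : V, v ∈ Vsp ∨ ∃ i, v ∈ C i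
  disjoint_sparse : ∀ i, Disjoint Vsp (C i)
  disjoint_cliques : ∀ i j, i ≠ j → Disjoint (C i) (C j)
  sparse_not_dense : ∀ v ∈ Vsp, ¬ IsDense G η v
  card_lower : ∀ i, (1 - ε) * (G.maxDegree : ℝ) ≤ ((C i).card : ℝ)
  card_upper : ∀ i, ((C i).card : ℝ) ≤ (1 + ε) * (G.maxDegree : ℝ)
  nbr_lower : ∀ i, ∀ v ∈ C i, (1 - ε) * (G.maxDegree : ℝ) ≤ ((G.neighborFinset v ∩ C i).card : ℝ)

/- Each vertex sees at least `(1 - ε)Δ` of the at most `(1 + ε)Δ` members, and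
`2(1 - ε) > 1 + ε` since `ε < 1/3`. -/
theorem IsACD.card_lt_card_neighborFinset_inter_add {G : SimpleGraph V} [DecidableRel G.Adj]
    {ε η : ℝ} {k : ℕ} {Vsp : Finset V} {C : Fin k → Finset V} (hACD : IsACD G ε η Vsp C)
    (hε : ε < 1 / 3) (hΔ : 0 < G.maxDegree) {i : Fin k} {u v : V} (hu : u ∈ C i)
    (hv : v ∈ C i) :
    #(C i) < #(G.neighborFinset u ∩ C i) + #(G.neighborFinset v ∩ C i) := by
  have hΔ' : (0 : ℝ) < G.maxDegree := by exact_mod_cast hΔ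
  have key : (#(C i) : ℝ) < #(G.neighborFinset u ∩ C i) + #(G.neighborFinset v ∩ C i) :=
    calc (#(C i) : ℝ) ≤ (1 + ε) * G.maxDegree := hACD.card_upper i
      _ < (1 - ε) * G.maxDegree + (1 - ε) * G.maxDegree := by nlinarith
      _ ≤ _ := add_le_add (hACD.nbr_lower i u hu) (hACD.nbr_lower i v hv)
  exact_mod_cast key

theorem stmt2_general (G : SimpleGraph V) [DecidableRel G.Adj] (ε η : ℝ)
    (hε : ε < 1 / 3)
    (hΔ : 0 < G.maxDegree)
    {k : ℕ} (Vsp : Finset V) (C : Fin k → Finset V) (hACD : IsACD G ε η Vsp C)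
    (i : Fin k) (u v : V) (hu : u ∈ C i) (hv : v ∈ C i) :
    G.Adj u v ∨ ∃ w ∈ C i, G.Adj u w ∧ G.Adj w v := by
  obtain ⟨w, hw⟩ := inter_nonempty_of_card_lt_card_add_card inter_subset_right
    inter_subset_right (hACD.card_lt_card_neighborFinset_inter_add hε hΔ hu hv)
  simp only [mem_inter, SimpleGraph.mem_neighborFinset] at hw
  exact Or.inr ⟨w, hw.1.2, hw.1.1, hw.2.1.symm⟩

/-- If `ε < 1/3` and `Δ > 0`, every almost-clique `C i` of an `(ε,η)`-ACD
has diameter at most 2: any two distinct `u, v ∈ C i` are adjacent or have a common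
neighbor `w ∈ C i`. -/
theorem stmt2 (G : SimpleGraph V) [DecidableRel G.Adj] (ε η : ℝ)
    (hε0 : 0 < ε) (hε : ε < 1 / 3) (hη : η ∈ Set.Ioo (0 : ℝ) 1)
    (hΔ : 0 < G.maxDegree)
    {k : ℕ} (Vsp : Finset V) (C : Fin k → Finset V) (hACD : IsACD G ε η Vsp C)
    (i : Fin k) (u v : V) (hu : u ∈ C i) (hv : v ∈ C i) (huv : u ≠ v) :
    G.Adj u v ∨ ∃ w ∈ C i, G.Adj u w ∧ G.Adj w v :=
  stmt2_general G ε η hε hΔ Vsp C hACD i u v hu hv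
end

section
/- Let γ < 1/2, let v be a γ-dense vertex of G, and let S_v ⊆ N(v) be a set of at least (1−γ)Δ neighbors of v, each of which is a γ-friend of v. Then every vertex w ∈ S_v is 2γ-dense; more precisely, every w ∈ S_v has at least (1−2γ)Δ neighbors in S_v, each of which is a 2γ-friend of w. -/
open Finset

variable {V : Type*} [Fintype V] [DecidableEq V]

/- Two subsets of `N(v)` overlap in at least `|A| + |B| − Δ` vertices. Applied to the common
neighbourhoods of `v` with `w` and with `x`, this makes any two `γ`-friends of `v` into
`2γ`-similar vertices; applied to `S_v` and `N(v) ∩ N(w)` it shows that `w ∈ S_v` has at least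
`(1−2γ)Δ` neighbours in `S_v`. -/

section

variable (G : SimpleGraph V) [DecidableRel G.Adj]

theorem SimpleGraph.card_add_card_le_maxDegree_add_card {v : V} {A B T : Finset V}
    (hA : A ⊆ G.neighborFinset v) (hB : B ⊆ G.neighborFinset v) (hT : A ∩ B ⊆ T) :
    (#A : ℝ) + #B ≤ G.maxDegree + #T := by
  have hunion : #(A ∪ B) ≤ G.maxDegree :=
    (card_le_card (union_subset hA hB)).trans
      ((G.card_neighborFinset_eq_degree v).trans_le (G.degree_le_maxDegree v))
  have hsplit := card_union_add_card_inter A B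
  have hinter := card_le_card hT
  exact_mod_cast (by omega : #A + #B ≤ G.maxDegree + #T)

variable {G}

theorem EpsSimilar.add_of_common {ε δ : ℝ} {v w x : V} (hw : EpsSimilar G ε v w)
    (hx : EpsSimilar G δ v x) : EpsSimilar G (ε + δ) w x := by
  have := G.card_add_card_le_maxDegree_add_card (A := G.neighborFinset v ∩ G.neighborFinset w)
    (B := G.neighborFinset v ∩ G.neighborFinset x) inter_subset_left inter_subset_left
    (inter_subset_inter inter_subset_right inter_subset_right)
  unfold EpsSimilar at *
  linarith

theorem SimpleGraph.le_card_inter_neighborFinset_of_epsSimilar {γ δ : ℝ} {v w : V} {S : Finset V}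
    (hS : S ⊆ G.neighborFinset v) (hScard : (1 - γ) * (G.maxDegree : ℝ) ≤ #S)
    (hw : EpsSimilar G δ v w) :
    (1 - (γ + δ)) * (G.maxDegree : ℝ) ≤ #(S ∩ G.neighborFinset w) := by
  have := G.card_add_card_le_maxDegree_add_card (B := G.neighborFinset v ∩ G.neighborFinset w)
    hS inter_subset_left (inter_subset_inter subset_rfl inter_subset_right)
  unfold EpsSimilar at hw
  linarith

end

theorem stmt6_general (G : SimpleGraph V) [DecidableRel G.Adj] (γ : ℝ)
    (v : V)
    (Sv : Finset V) (hSsub : Sv ⊆ G.neighborFinset v)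
    (hScard : (1 - γ) * (G.maxDegree : ℝ) ≤ (Sv.card : ℝ))
    (hSfriend : ∀ w ∈ Sv, Friends G γ v w) :
    ∀ w ∈ Sv,
      (1 - 2 * γ) * (G.maxDegree : ℝ) ≤
          (((Sv ∩ G.neighborFinset w).filter (fun x => Friends G (2 * γ) w x)).card : ℝ) ∧
        IsDense G (2 * γ) w := by
  intro w hw
  have hfriends : ∀ x ∈ Sv ∩ G.neighborFinset w, Friends G (2 * γ) w x := by
    intro x hx
    rw [mem_inter, SimpleGraph.mem_neighborFinset] at hx
    exact ⟨two_mul γ ▸ (hSfriend w hw).1.add_of_common (hSfriend x hx.1).1, hx.2⟩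
  have hcard : (1 - 2 * γ) * (G.maxDegree : ℝ) ≤ #(Sv ∩ G.neighborFinset w) :=
    two_mul γ ▸ G.le_card_inter_neighborFinset_of_epsSimilar hSsub hScard (hSfriend w hw).1
  rw [filter_true_of_mem hfriends]
  refine ⟨hcard, hcard.trans (mod_cast card_le_card fun x hx => ?_)⟩
  exact mem_filter.mpr ⟨mem_univ x, hfriends x hx⟩

/-- Let `γ < 1/2`, let `v` be a `γ`-dense vertex and `S_v ⊆ N(v)` a set of
at least `(1−γ)Δ` neighbors of `v`, each a `γ`-friend of `v`. Then every `w ∈ S_v` has at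
least `(1−2γ)Δ` neighbors in `S_v`, each a `2γ`-friend of `w`; in particular every `w ∈ S_v`
is `2γ`-dense. -/
theorem stmt6 (G : SimpleGraph V) [DecidableRel G.Adj] (γ : ℝ)
    (hγ0 : 0 < γ) (hγ : γ < 1 / 2) (v : V) (hv : IsDense G γ v)
    (Sv : Finset V) (hSsub : Sv ⊆ G.neighborFinset v)
    (hScard : (1 - γ) * (G.maxDegree : ℝ) ≤ (Sv.card : ℝ))
    (hSfriend : ∀ w ∈ Sv, Friends G γ v w) :
    ∀ w ∈ Sv,
      (1 - 2 * γ) * (G.maxDegree : ℝ) ≤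
          (((Sv ∩ G.neighborFinset w).filter (fun x => Friends G (2 * γ) w x)).card : ℝ) ∧
        IsDense G (2 * γ) w :=
  stmt6_general G γ v Sv hSsub hScard hSfriend
end

section
/- Let (M_i)_{i≥0} be a sequence of nonnegative real numbers and let r be a real number with 0 ≤ r ≤ 1/16. Suppose M_0 ≤ 1/4 and M_{i+1} ≤ M_i^{3/2} + r for all i ≥ 0. Then for all i ≥ 0, M_i ≤ (1/4)^{(5/4)^i} + 4r. -/
/-!
Writing `b i = (1/4) ^ ((5/4) ^ i)`, so that `b (i+1) = b i ^ (5/4)` and `b i ≤ 1/4`, the bound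
`M i ≤ b i + 4r` propagates by induction as soon as `(b + 4r) ^ (3/2) + r ≤ b ^ (5/4) + 4r`. By
convexity of `x ↦ x ^ (3/2)`, `(b + 4r) ^ (3/2) ≤ √2 (b ^ (3/2) + (4r) ^ (3/2))`; the first term is
at most `b ^ (5/4)` because `√2 b ^ (1/4) ≤ 1` for `b ≤ 1/4`, and the second at most `3r` because
`√2 · 8 √r ≤ 3` for `r ≤ 9/128`.
-/

open Real

lemma rpow_three_halves_add_le {a b : ℝ} (ha : 0 ≤ a) (hb : 0 ≤ b) :
    (a + b) ^ ((3 : ℝ) / 2) ≤ √2 * (a ^ ((3 : ℝ) / 2) + b ^ ((3 : ℝ) / 2)) := by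
  lift a to NNReal using ha
  lift b to NNReal using hb
  have h := NNReal.rpow_add_le_mul_rpow_add_rpow a b (p := 3 / 2) (by norm_num)
  rw [show (3 : ℝ) / 2 - 1 = 1 / 2 by norm_num, ← NNReal.sqrt_eq_rpow] at h
  have hcoe := NNReal.coe_le_coe.2 h
  push_cast [Real.coe_sqrt] at hcoe
  exact hcoe

lemma sqrt_two_mul_rpow_three_halves_le {a : ℝ} (ha : 0 ≤ a) (ha4 : a ≤ 1 / 4) :
    √2 * a ^ ((3 : ℝ) / 2) ≤ a ^ ((5 : ℝ) / 4) := by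
  have hsplit : a ^ ((3 : ℝ) / 2) = a ^ ((1 : ℝ) / 4) * a ^ ((5 : ℝ) / 4) := by
    rw [← rpow_add' ha (by norm_num)]; norm_num
  have hfourth : (a ^ ((1 : ℝ) / 4)) ^ 4 = a := by
    rw [← rpow_mul_natCast ha]; norm_num
  have hle : √2 * a ^ ((1 : ℝ) / 4) ≤ 1 := by
    refine (pow_le_one_iff_of_nonneg (by positivity) (by norm_num : 4 ≠ 0)).1 ?_
    rw [mul_pow, hfourth, show √2 ^ 4 = (√2 ^ 2) ^ 2 by ring, sq_sqrt zero_le_two]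
    linarith
  rw [hsplit, ← mul_assoc]
  exact mul_le_of_le_one_left (by positivity) hle

lemma sqrt_two_mul_four_mul_rpow_three_halves_le {r : ℝ} (hr0 : 0 ≤ r) (hr : r ≤ 9 / 128) :
    √2 * (4 * r) ^ ((3 : ℝ) / 2) ≤ 3 * r := by
  have hsplit : (4 * r) ^ ((3 : ℝ) / 2) = 8 * √r * r := by
    rw [show (3 : ℝ) / 2 = 1 / 2 + 1 by norm_num, rpow_add' (by positivity) (by norm_num),
      rpow_one, ← sqrt_eq_rpow, sqrt_mul (by norm_num), show (4 : ℝ) = 2 ^ 2 by norm_num,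
      sqrt_sq zero_le_two]
    ring
  have hle : √2 * (8 * √r) ≤ 3 := by
    refine (pow_le_pow_iff_left₀ (by positivity) (by norm_num) two_ne_zero).1 ?_
    rw [mul_pow, mul_pow, sq_sqrt zero_le_two, sq_sqrt hr0]
    linarith
  rw [hsplit, ← mul_assoc, ← mul_assoc]
  exact mul_le_mul_of_nonneg_right (by linarith) hr0

lemma rpow_three_halves_add_four_mul_le {a r : ℝ} (ha : 0 ≤ a) (ha4 : a ≤ 1 / 4) (hr0 : 0 ≤ r)
    (hr : r ≤ 9 / 128) : (a + 4 * r) ^ ((3 : ℝ) / 2) ≤ a ^ ((5 : ℝ) / 4) + 3 * r :=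
  calc (a + 4 * r) ^ ((3 : ℝ) / 2)
      ≤ √2 * a ^ ((3 : ℝ) / 2) + √2 * (4 * r) ^ ((3 : ℝ) / 2) := by
        rw [← mul_add]; exact rpow_three_halves_add_le ha (by positivity)
    _ ≤ a ^ ((5 : ℝ) / 4) + 3 * r :=
        add_le_add (sqrt_two_mul_rpow_three_halves_le ha ha4)
          (sqrt_two_mul_four_mul_rpow_three_halves_le hr0 hr)

lemma one_quarter_rpow_five_quarters_pow_le (i : ℕ) : (1 / 4 : ℝ) ^ ((5 / 4 : ℝ) ^ i) ≤ 1 / 4 :=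
  calc (1 / 4 : ℝ) ^ ((5 / 4 : ℝ) ^ i) ≤ (1 / 4 : ℝ) ^ (1 : ℝ) :=
        rpow_le_rpow_of_exponent_ge (by norm_num) (by norm_num) (one_le_pow₀ (by norm_num))
    _ = 1 / 4 := rpow_one _

lemma one_quarter_rpow_five_quarters_pow_succ (i : ℕ) :
    (1 / 4 : ℝ) ^ ((5 / 4 : ℝ) ^ (i + 1)) = ((1 / 4 : ℝ) ^ ((5 / 4 : ℝ) ^ i)) ^ ((5 : ℝ) / 4) := by
  rw [← rpow_mul (by norm_num), pow_succ]

/-- If `0 ≤ r ≤ 1/16`, `M 0 ≤ 1/4` and `M (i+1) ≤ (M i)^(3/2) + r` for a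
sequence of nonnegative reals, then `M i ≤ (1/4)^((5/4)^i) + 4r` for all `i`. -/
theorem stmt10 (M : ℕ → ℝ) (r : ℝ) (hM : ∀ i, 0 ≤ M i)
    (hr0 : 0 ≤ r) (hr : r ≤ 1 / 16) (h0 : M 0 ≤ 1 / 4)
    (hrec : ∀ i, M (i + 1) ≤ M i ^ ((3 : ℝ) / 2) + r) :
    ∀ i, M i ≤ (1 / 4 : ℝ) ^ ((5 / 4 : ℝ) ^ i) + 4 * r := by
  intro i
  induction i with
  | zero => rw [pow_zero, rpow_one]; linarith
  | succ n ih =>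
    set b := (1 / 4 : ℝ) ^ ((5 / 4 : ℝ) ^ n)
    have hstep : (b + 4 * r) ^ ((3 : ℝ) / 2) ≤ b ^ ((5 : ℝ) / 4) + 3 * r :=
      rpow_three_halves_add_four_mul_le (by positivity)
        (one_quarter_rpow_five_quarters_pow_le n) hr0 (by linarith)
    calc M (n + 1) ≤ M n ^ ((3 : ℝ) / 2) + r := hrec n
      _ ≤ (b + 4 * r) ^ ((3 : ℝ) / 2) + r := by gcongr; exact hM n
      _ ≤ _ := by rw [one_quarter_rpow_five_quarters_pow_succ]; linarith
end
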